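/- Let L be a Lie algebra over R_k that admits a Lie algebra lift to R_{k+1}, with residue-field reduction L̄. Then the set of all lifts of L to R_{k+1}, taken up to isomorphisms of Lie algebras inducing the identity on L, is in bijection with H²(L̄, ad). -/

import Mathlib

open Pointwise

/-- `Rmod R π m` is the quotient ring `R/π^m R`. -/
abbrev Rmod (R : Type) [CommRing R] (π : R) (m : ℕ) : Type :=
  R ⧸ Ideal.span {π ^ m}

section Setup

variable (R : Type) [CommRing R] (π : R) (k : ℕ)
variable (B : Type) [AddCommGroup B] [Module (Rmod R π (k + 1)) B]

/-- The image of `π` in `R_{k+1}`. -/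
noncomputable abbrev pbar : Rmod R π (k + 1) := Ideal.Quotient.mk _ π

/-- The submodule `π^k B` of `B`. -/
noncomputable abbrev pikB : Submodule (Rmod R π (k + 1)) B :=
  (pbar R π k) ^ k • (⊤ : Submodule (Rmod R π (k + 1)) B)

/-- The submodule `π B` of `B`. -/
noncomputable abbrev piB : Submodule (Rmod R π (k + 1)) B :=
  (pbar R π k) • (⊤ : Submodule (Rmod R π (k + 1)) B)

/-- `L = B/π^k B`, the reduction of `B` to a module over `R_k`. -/
noncomputable abbrev Lred := B ⧸ pikB R π k B

/-- `L̄ = B/πB`, the reduction of `B` to a vector space over the residue field. -/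
noncomputable abbrev Lbar := B ⧸ piB R π k B

/-- The reduction map `mod : B → L = B/π^k B`. -/
noncomputable abbrev modk : B →ₗ[Rmod R π (k + 1)] Lred R π k B :=
  (pikB R π k B).mkQ

/-- The reduction map `λ : B → L̄ = B/πB`. -/
noncomputable abbrev lam : B →ₗ[Rmod R π (k + 1)] Lbar R π k B :=
  (piB R π k B).mkQ

/-- `ψ : L̄ → B`, the map sending `x mod πB` to `π^k x`; its (corestriction to `π^k B`)
is the inverse of the canonical isomorphism `χ : π^k B → L̄`. -/
noncomputable def psi : Lbar R π k B →ₗ[Rmod R π (k + 1)] B :=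
  Submodule.liftQ _ ((pbar R π k) ^ k • (LinearMap.id : B →ₗ[Rmod R π (k + 1)] B))
    (by
      intro x hx
      rw [← SetLike.mem_coe, Submodule.coe_pointwise_smul, Set.mem_smul_set] at hx
      obtain ⟨y, -, rfl⟩ := hx
      have h0 : (pbar R π k) ^ k * pbar R π k = 0 := by
        rw [← pow_succ, ← map_pow, Ideal.Quotient.eq_zero_iff_mem]
        exact Ideal.mem_span_singleton_self _
      simp only [LinearMap.mem_ker, LinearMap.smul_apply, LinearMap.id_apply, smul_smul]
      rw [h0, zero_smul])

@[simp] theorem psi_apply (x : B) :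
    psi R π k B (lam R π k B x) = ((pbar R π k) ^ k) • x := rfl

end Setup

/-!
Fix the lift `br0`. Any other lift `br` agrees with `br0` modulo `π^k B`, which is the image of
`ψ : L̄ → B`; `ψ` is injective because `B` is free and `R` is a domain. As `br - br0` is moreover
killed by `π` in each argument, `br = br0 + ψ ∘ ω ∘ (λ × λ)` for a unique bilinear form `ω` on `L̄`.
Since `k ≥ 1` we have `λ ∘ ψ = 0`, so such a bracket acts on `π^k B` through `brb`, and the
Jacobiator of `br` is that of `br0` minus `ψ (dω)`: lifts are exactly the 2-cocycles. Likewise an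
automorphism of `B` inducing the identity on `L` has the form `1 + ψ ∘ φ ∘ λ`, and it carries the
lift of `ω₁` to the lift of `ω₂` exactly when `ω₂ - ω₁ = -dφ`.
-/

section CochainAlgebra

variable {A M : Type*} [CommRing A] [AddCommGroup M] [Module A M]

def jacobiator (br : M →ₗ[A] M →ₗ[A] M) (x y z : M) : M :=
  br (br x y) z + br (br y z) x + br (br z x) y

def chevalleyEilenbergD₁ (brb : M →ₗ[A] M →ₗ[A] M) (φ : M →ₗ[A] M) (u v : M) : M :=
  -φ (brb u v) + brb u (φ v) - brb v (φ u)

def chevalleyEilenbergD₂ (brb ω : M →ₗ[A] M →ₗ[A] M) (u v w : M) : M :=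
  brb u (ω v w) - brb v (ω u w) + brb w (ω u v) - ω (brb u v) w + ω (brb u w) v - ω (brb v w) u

theorem cyclic_sum_eq_neg_chevalleyEilenbergD₂ {brb ω : M →ₗ[A] M →ₗ[A] M} (hb : brb.IsAlt)
    (hω : ω.IsAlt) (u v w : M) :
    brb (ω u v) w + ω (brb u v) w + (brb (ω v w) u + ω (brb v w) u)
      + (brb (ω w u) v + ω (brb w u) v) = -chevalleyEilenbergD₂ brb ω u v w := by
  have e1 : brb (ω u v) w = -brb w (ω u v) := (hb.neg w _).symm
  have e2 : brb (ω v w) u = -brb u (ω v w) := (hb.neg u _).symm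
  have e3 : brb (ω w u) v = brb v (ω u w) := by
    rw [← hω.neg u w, map_neg, LinearMap.neg_apply, hb.neg]
  have e4 : ω (brb w u) v = -ω (brb u w) v := by
    rw [← hb.neg u w, map_neg, LinearMap.neg_apply]
  rw [e1, e2, e3, e4, chevalleyEilenbergD₂]
  abel

end CochainAlgebra

section Arithmetic

variable {R : Type} [CommRing R] {π : R} {k : ℕ}

theorem pbar_dvd_of_pbar_pow_mul_eq_zero [IsDomain R] (hπ : π ≠ 0) {a : Rmod R π (k + 1)}
    (h : pbar R π k ^ k * a = 0) : pbar R π k ∣ a := by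
  obtain ⟨α, rfl⟩ := Ideal.Quotient.mk_surjective a
  rw [← map_pow, ← map_mul, Ideal.Quotient.eq_zero_iff_mem, Ideal.mem_span_singleton,
    pow_succ] at h
  exact map_dvd _ ((mul_dvd_mul_iff_left (pow_ne_zero k hπ)).1 h)

end Arithmetic

section Lifts

variable {R : Type} [CommRing R] {π : R} {k : ℕ}
variable {B : Type} [AddCommGroup B] [Module (Rmod R π (k + 1)) B]

local notation "𝔸" => Rmod R π (k + 1)
local notation "L̄" => Lbar R π k B
local notation "ψ" => psi R π k B
local notation "ℓ" => lam R π k B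

theorem pbar_smul_lbar (u : L̄) : pbar R π k • u = 0 := by
  obtain ⟨x, rfl⟩ := Submodule.Quotient.mk_surjective _ u
  rw [← Submodule.Quotient.mk_smul, Submodule.Quotient.mk_eq_zero]
  exact Submodule.smul_mem_pointwise_smul x _ ⊤ trivial

theorem piB_le_ker {N : Type*} [AddCommGroup N] [Module 𝔸 N] (hN : ∀ n : N, pbar R π k • n = 0)
    (f : B →ₗ[𝔸] N) : piB R π k B ≤ LinearMap.ker f := by
  intro x hx
  obtain ⟨y, -, rfl⟩ := (Submodule.mem_smul_pointwise_iff_exists _ _ _).1 hx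
  rw [LinearMap.mem_ker, map_smul, hN]

theorem pikB_le_piB (hk : 1 ≤ k) : pikB R π k B ≤ piB R π k B := by
  intro x hx
  obtain ⟨y, -, rfl⟩ := (Submodule.mem_smul_pointwise_iff_exists _ _ _).1 hx
  have hpow : pbar R π k ^ k = pbar R π k * pbar R π k ^ (k - 1) := by
    rw [← pow_succ', Nat.sub_add_cancel hk]
  rw [hpow, mul_smul]
  exact Submodule.smul_mem_pointwise_smul _ _ ⊤ trivial

theorem mem_piB_of_pbar_pow_smul_eq_zero [IsDomain R] (hπ : π ≠ 0) [Module.Free 𝔸 B] {x : B}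
    (h : pbar R π k ^ k • x = 0) : x ∈ piB R π k B := by
  let b := Module.Free.chooseBasis 𝔸 B
  have hdvd (i) : pbar R π k ∣ b.repr x i :=
    pbar_dvd_of_pbar_pow_mul_eq_zero hπ (by simpa using congrArg (fun z => b.repr z i) h)
  choose d hd using hdvd
  refine (Submodule.mem_smul_pointwise_iff_exists _ _ _).2
    ⟨(b.repr x).sum fun i _ => d i • b i, trivial, ?_⟩
  conv_rhs => rw [← b.linearCombination_repr x]
  rw [Finsupp.linearCombination_apply, Finsupp.smul_sum]
  exact Finsupp.sum_congr fun i _ => by rw [hd i, mul_smul]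

theorem psi_injective [IsDomain R] (hπ : π ≠ 0) [Module.Free 𝔸 B] : Function.Injective ψ := by
  refine (injective_iff_map_eq_zero ψ).2 fun u hu => ?_
  obtain ⟨x, rfl⟩ := Submodule.Quotient.mk_surjective _ u
  exact (Submodule.Quotient.mk_eq_zero _).2 (mem_piB_of_pbar_pow_smul_eq_zero hπ hu)

theorem range_psi : LinearMap.range ψ = pikB R π k B := by
  ext c
  constructor
  · rintro ⟨u, rfl⟩
    obtain ⟨x, rfl⟩ := Submodule.Quotient.mk_surjective _ u
    exact Submodule.smul_mem_pointwise_smul x _ ⊤ trivial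
  · intro hc
    obtain ⟨y, -, rfl⟩ := (Submodule.mem_smul_pointwise_iff_exists _ _ _).1 hc
    exact ⟨ℓ y, rfl⟩

theorem mem_range_psi_iff (c : B) : c ∈ LinearMap.range ψ ↔ modk R π k B c = 0 := by
  rw [range_psi, Submodule.mkQ_apply, Submodule.Quotient.mk_eq_zero]

theorem modk_psi (u : L̄) : modk R π k B (ψ u) = 0 :=
  (mem_range_psi_iff _).1 ⟨u, rfl⟩

theorem lam_psi (hk : 1 ≤ k) (u : L̄) : ℓ (ψ u) = 0 :=
  (Submodule.Quotient.mk_eq_zero _).2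
    (pikB_le_piB hk ((Submodule.Quotient.mk_eq_zero _).1 (modk_psi u)))

theorem pbar_smul_linearMap_lbar (f : B →ₗ[𝔸] L̄) : pbar R π k • f = 0 :=
  LinearMap.ext fun x => pbar_smul_lbar (f x)

variable (br0 : B →ₗ[Rmod R π (k + 1)] B →ₗ[Rmod R π (k + 1)] B)
variable {brb : Lbar R π k B →ₗ[Rmod R π (k + 1)] Lbar R π k B →ₗ[Rmod R π (k + 1)] Lbar R π k B}

noncomputable def liftOfForm (ω : L̄ →ₗ[𝔸] L̄ →ₗ[𝔸] L̄) : B →ₗ[𝔸] B →ₗ[𝔸] B :=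
  br0 + (ω.compr₂ ψ).compl₁₂ ℓ ℓ

noncomputable def formOfLift [IsDomain R] (hπ : π ≠ 0) [Module.Free 𝔸 B]
    (br : B →ₗ[𝔸] B →ₗ[𝔸] B)
    (hbr : ∀ x y, modk R π k B (br x y) = modk R π k B (br0 x y)) : L̄ →ₗ[𝔸] L̄ →ₗ[𝔸] L̄ :=
  (LinearMap.codRestrict₂ (br - br0) ψ (psi_injective hπ) fun x y => by
      rw [mem_range_psi_iff, LinearMap.sub_apply, LinearMap.sub_apply, map_sub, hbr,
        sub_self]).liftQ₂
    _ _ (piB_le_ker pbar_smul_linearMap_lbar _) (piB_le_ker pbar_smul_linearMap_lbar _)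

variable {br0}

theorem isAlt_of_lam (hbrb : ∀ x y, ℓ (br0 x y) = brb (ℓ x) (ℓ y)) (halt0 : br0.IsAlt) :
    brb.IsAlt := by
  intro u
  obtain ⟨x, rfl⟩ := Submodule.Quotient.mk_surjective _ u
  exact (hbrb x x).symm.trans (by rw [halt0 x, map_zero])

theorem liftOfForm_apply (ω : L̄ →ₗ[𝔸] L̄ →ₗ[𝔸] L̄) (x y : B) :
    liftOfForm br0 ω x y = br0 x y + ψ (ω (ℓ x) (ℓ y)) :=
  rfl

theorem modk_liftOfForm (ω : L̄ →ₗ[𝔸] L̄ →ₗ[𝔸] L̄) (x y : B) :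
    modk R π k B (liftOfForm br0 ω x y) = modk R π k B (br0 x y) := by
  rw [liftOfForm_apply, map_add, modk_psi, add_zero]

theorem psi_formOfLift [IsDomain R] (hπ : π ≠ 0) [Module.Free 𝔸 B] (br : B →ₗ[𝔸] B →ₗ[𝔸] B)
    (hbr : ∀ x y, modk R π k B (br x y) = modk R π k B (br0 x y)) (x y : B) :
    ψ (formOfLift br0 hπ br hbr (ℓ x) (ℓ y)) = br x y - br0 x y :=
  LinearMap.codRestrict₂_apply (br - br0) ψ (psi_injective hπ) _ x y

theorem liftOfForm_formOfLift [IsDomain R] (hπ : π ≠ 0) [Module.Free 𝔸 B]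
    (br : B →ₗ[𝔸] B →ₗ[𝔸] B) (hbr : ∀ x y, modk R π k B (br x y) = modk R π k B (br0 x y)) :
    liftOfForm br0 (formOfLift br0 hπ br hbr) = br := by
  ext x y
  rw [liftOfForm_apply, psi_formOfLift, add_sub_cancel]

theorem formOfLift_liftOfForm [IsDomain R] (hπ : π ≠ 0) [Module.Free 𝔸 B]
    (ω : L̄ →ₗ[𝔸] L̄ →ₗ[𝔸] L̄)
    (h : ∀ x y, modk R π k B (liftOfForm br0 ω x y) = modk R π k B (br0 x y)) :
    formOfLift br0 hπ (liftOfForm br0 ω) h = ω := by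
  refine LinearMap.ext fun u => LinearMap.ext fun v => ?_
  obtain ⟨x, rfl⟩ := Submodule.mkQ_surjective _ u
  obtain ⟨y, rfl⟩ := Submodule.mkQ_surjective _ v
  apply psi_injective hπ
  rw [psi_formOfLift, liftOfForm_apply, add_sub_cancel_left]

theorem isAlt_liftOfForm_iff [IsDomain R] (hπ : π ≠ 0) [Module.Free 𝔸 B] (halt0 : br0.IsAlt)
    (ω : L̄ →ₗ[𝔸] L̄ →ₗ[𝔸] L̄) : (liftOfForm br0 ω).IsAlt ↔ ω.IsAlt := by
  have hdiag (x : B) : liftOfForm br0 ω x x = ψ (ω (ℓ x) (ℓ x)) := by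
    rw [liftOfForm_apply, halt0 x, zero_add]
  simp only [LinearMap.IsAlt, hdiag, map_eq_zero_iff ψ (psi_injective hπ)]
  refine ⟨fun h u => ?_, fun h x => h _⟩
  obtain ⟨x, rfl⟩ := Submodule.mkQ_surjective _ u
  exact h x

section
variable (hk : 1 ≤ k) (hbrb : ∀ x y, lam R π k B (br0 x y) = brb (lam R π k B x) (lam R π k B y))
include hk hbrb

theorem lam_liftOfForm (ω : L̄ →ₗ[𝔸] L̄ →ₗ[𝔸] L̄) (x y : B) :
    ℓ (liftOfForm br0 ω x y) = brb (ℓ x) (ℓ y) := by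
  rw [liftOfForm_apply, map_add, lam_psi hk, add_zero, hbrb]

theorem liftOfForm_psi_left (ω : L̄ →ₗ[𝔸] L̄ →ₗ[𝔸] L̄) (u : L̄) (y : B) :
    liftOfForm br0 ω (ψ u) y = ψ (brb u (ℓ y)) := by
  obtain ⟨x, rfl⟩ := Submodule.Quotient.mk_surjective _ u
  rw [liftOfForm_apply, lam_psi hk, map_zero, LinearMap.zero_apply, map_zero, add_zero]
  change br0 (pbar R π k ^ k • x) y = ψ (brb (ℓ x) (ℓ y))
  rw [map_smul, LinearMap.smul_apply, ← hbrb, psi_apply]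

theorem liftOfForm_psi_right (ω : L̄ →ₗ[𝔸] L̄ →ₗ[𝔸] L̄) (x : B) (u : L̄) :
    liftOfForm br0 ω x (ψ u) = ψ (brb (ℓ x) u) := by
  obtain ⟨y, rfl⟩ := Submodule.Quotient.mk_surjective _ u
  rw [liftOfForm_apply, lam_psi hk, map_zero, map_zero, add_zero]
  change br0 x (pbar R π k ^ k • y) = ψ (brb (ℓ x) (ℓ y))
  rw [map_smul, ← hbrb, psi_apply]

theorem liftOfForm_add_psi (ω : L̄ →ₗ[𝔸] L̄ →ₗ[𝔸] L̄) (φ : L̄ →ₗ[𝔸] L̄) (x y : B) :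
    liftOfForm br0 ω (x + ψ (φ (ℓ x))) (y + ψ (φ (ℓ y)))
      = liftOfForm br0 ω x y + ψ (brb (φ (ℓ x)) (ℓ y) + brb (ℓ x) (φ (ℓ y))) := by
  simp only [map_add, LinearMap.add_apply, liftOfForm_psi_left hk hbrb,
    liftOfForm_psi_right hk hbrb, lam_psi hk, map_zero]
  abel

theorem liftOfForm_liftOfForm (ω : L̄ →ₗ[𝔸] L̄ →ₗ[𝔸] L̄) (x y z : B) :
    liftOfForm br0 ω (liftOfForm br0 ω x y) z
      = br0 (br0 x y) z + ψ (brb (ω (ℓ x) (ℓ y)) (ℓ z) + ω (brb (ℓ x) (ℓ y)) (ℓ z)) := by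
  rw [liftOfForm_apply ω x y, map_add, LinearMap.add_apply, liftOfForm_psi_left hk hbrb,
    liftOfForm_apply, hbrb, map_add]
  abel

theorem jacobiator_liftOfForm (halt0 : br0.IsAlt) (ω : L̄ →ₗ[𝔸] L̄ →ₗ[𝔸] L̄) (hω : ω.IsAlt)
    (x y z : B) :
    jacobiator (liftOfForm br0 ω) x y z
      = jacobiator br0 x y z - ψ (chevalleyEilenbergD₂ brb ω (ℓ x) (ℓ y) (ℓ z)) := by
  rw [jacobiator, liftOfForm_liftOfForm hk hbrb, liftOfForm_liftOfForm hk hbrb,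
    liftOfForm_liftOfForm hk hbrb, sub_eq_add_neg, ← map_neg,
    ← cyclic_sum_eq_neg_chevalleyEilenbergD₂ (isAlt_of_lam hbrb halt0) hω, jacobiator]
  simp only [map_add]
  abel

end

theorem exists_eq_add_psi_of_modk_eq [IsDomain R] (hπ : π ≠ 0) [Module.Free 𝔸 B]
    (Ψ : B →ₗ[𝔸] B) (hΨ : ∀ x, modk R π k B (Ψ x) = modk R π k B x) :
    ∃ φ : L̄ →ₗ[𝔸] L̄, ∀ x, Ψ x = x + ψ (φ (ℓ x)) := by
  have hinj : Function.Injective ψ := psi_injective hπ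
  let E := LinearMap.codRestrictOfInjective (Ψ - LinearMap.id) ψ hinj fun x => by
    rw [mem_range_psi_iff, LinearMap.sub_apply, map_sub, hΨ, LinearMap.id_apply, sub_self]
  refine ⟨(piB R π k B).liftQ E (piB_le_ker pbar_smul_lbar E), fun x => ?_⟩
  rw [Submodule.mkQ_apply, Submodule.liftQ_apply,
    LinearMap.codRestrictOfInjective_comp_apply, LinearMap.sub_apply, LinearMap.id_apply,
    add_sub_cancel]

noncomputable def addPsiEquiv (hk : 1 ≤ k) (φ : L̄ →ₗ[𝔸] L̄) : B ≃ₗ[𝔸] B :=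
  LinearEquiv.ofLinearMap (LinearMap.id + ψ ∘ₗ φ ∘ₗ ℓ) (LinearMap.id - ψ ∘ₗ φ ∘ₗ ℓ)
    (by ext x; simp only [LinearMap.comp_apply, LinearMap.add_apply, LinearMap.sub_apply,
      LinearMap.id_apply, map_sub, lam_psi hk, map_zero]; abel)
    (by ext x; simp only [LinearMap.comp_apply, LinearMap.add_apply, LinearMap.sub_apply,
      LinearMap.id_apply, map_add, lam_psi hk, map_zero]; abel)

theorem addPsiEquiv_apply (hk : 1 ≤ k) (φ : L̄ →ₗ[𝔸] L̄) (x : B) :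
    addPsiEquiv hk φ x = x + ψ (φ (ℓ x)) :=
  rfl

section
variable [IsDomain R] (hπ : π ≠ 0) [Module.Free (Rmod R π (k + 1)) B] (hk : 1 ≤ k)
variable (hbrb : ∀ x y, lam R π k B (br0 x y) = brb (lam R π k B x) (lam R π k B y))
variable (halt0 : br0.IsAlt)
include hπ hk hbrb halt0

theorem jacobi_liftOfForm_iff (hjac0 : ∀ x y z, jacobiator br0 x y z = 0)
    (ω : L̄ →ₗ[𝔸] L̄ →ₗ[𝔸] L̄) (hω : ω.IsAlt) :
    (∀ x y z, jacobiator (liftOfForm br0 ω) x y z = 0) ↔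
      ∀ u v w, chevalleyEilenbergD₂ brb ω u v w = 0 := by
  simp only [jacobiator_liftOfForm hk hbrb halt0 ω hω, hjac0, zero_sub, neg_eq_zero,
    map_eq_zero_iff ψ (psi_injective hπ)]
  have hs := Submodule.mkQ_surjective (piB R π k B)
  exact ⟨fun h => hs.forall₃.2 h, fun h x y z => h _ _ _⟩

theorem liftOfForm_add_psi_eq_iff (ω₁ ω₂ : L̄ →ₗ[𝔸] L̄ →ₗ[𝔸] L̄) (φ : L̄ →ₗ[𝔸] L̄) (x y : B) :
    liftOfForm br0 ω₂ (x + ψ (φ (ℓ x))) (y + ψ (φ (ℓ y)))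
        = liftOfForm br0 ω₁ x y + ψ (φ (ℓ (liftOfForm br0 ω₁ x y)))
      ↔ ω₂ (ℓ x) (ℓ y) - ω₁ (ℓ x) (ℓ y) = -chevalleyEilenbergD₁ brb φ (ℓ x) (ℓ y) := by
  rw [liftOfForm_add_psi hk hbrb, lam_liftOfForm hk hbrb, liftOfForm_apply, liftOfForm_apply,
    add_assoc, add_assoc, add_right_inj, ← map_add, ← map_add, (psi_injective hπ).eq_iff,
    chevalleyEilenbergD₁, ← (isAlt_of_lam hbrb halt0).neg (φ (ℓ x))]
  constructor <;> intro h
  · linear_combination (norm := module) h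
  · linear_combination (norm := module) h

theorem exists_chevalleyEilenbergD₁_iff_exists_iso (ω₁ ω₂ : L̄ →ₗ[𝔸] L̄ →ₗ[𝔸] L̄) :
    (∃ φ : L̄ →ₗ[𝔸] L̄, ∀ u v, ω₂ u v - ω₁ u v = -chevalleyEilenbergD₁ brb φ u v) ↔
      ∃ Ψ : B ≃ₗ[𝔸] B, (∀ x y, liftOfForm br0 ω₂ (Ψ x) (Ψ y) = Ψ (liftOfForm br0 ω₁ x y)) ∧
        ∀ x, modk R π k B (Ψ x) = modk R π k B x := by
  constructor
  · rintro ⟨φ, hφ⟩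
    refine ⟨addPsiEquiv hk φ, fun x y => ?_, fun x => ?_⟩
    · exact (liftOfForm_add_psi_eq_iff hπ hk hbrb halt0 ω₁ ω₂ φ x y).2 (hφ _ _)
    · rw [addPsiEquiv_apply, map_add, modk_psi, add_zero]
  · rintro ⟨Ψ, hΨ, hmod⟩
    obtain ⟨φ, hφ⟩ := exists_eq_add_psi_of_modk_eq hπ Ψ.toLinearMap hmod
    refine ⟨φ, fun u v => ?_⟩
    obtain ⟨x, rfl⟩ := Submodule.mkQ_surjective _ u
    obtain ⟨y, rfl⟩ := Submodule.mkQ_surjective _ v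
    have hΨxy := hΨ x y
    simp only [LinearEquiv.coe_coe] at hφ
    simp only [hφ] at hΨxy
    exact (liftOfForm_add_psi_eq_iff hπ hk hbrb halt0 ω₁ ω₂ φ x y).1 hΨxy

noncomputable def cocyclesEquivLifts (hjac0 : ∀ x y z, jacobiator br0 x y z = 0)
    (brL : Lred R π k B →ₗ[𝔸] Lred R π k B →ₗ[𝔸] Lred R π k B)
    (hlift0 : ∀ x y, modk R π k B (br0 x y) = brL (modk R π k B x) (modk R π k B y)) :
    {ω : L̄ →ₗ[𝔸] L̄ →ₗ[𝔸] L̄ // ω.IsAlt ∧ ∀ u v w, chevalleyEilenbergD₂ brb ω u v w = 0} ≃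
      {br : B →ₗ[𝔸] B →ₗ[𝔸] B // br.IsAlt ∧ (∀ x y z, jacobiator br x y z = 0) ∧
        ∀ x y, modk R π k B (br x y) = brL (modk R π k B x) (modk R π k B y)} where
  toFun ω := ⟨liftOfForm br0 ω.1, (isAlt_liftOfForm_iff hπ halt0 ω.1).2 ω.2.1,
    (jacobi_liftOfForm_iff hπ hk hbrb halt0 hjac0 ω.1 ω.2.1).2 ω.2.2,
    fun x y => by rw [modk_liftOfForm, hlift0]⟩
  invFun br :=
    have hbr (x y : B) : modk R π k B (br.1 x y) = modk R π k B (br0 x y) := by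
      rw [br.2.2.2, hlift0]
    have hround := liftOfForm_formOfLift hπ br.1 hbr
    have halt := (isAlt_liftOfForm_iff hπ halt0 _).1 (by rw [hround]; exact br.2.1)
    ⟨formOfLift br0 hπ br.1 hbr, halt,
      (jacobi_liftOfForm_iff hπ hk hbrb halt0 hjac0 _ halt).1 (by rw [hround]; exact br.2.2.1)⟩
  left_inv ω := Subtype.ext (formOfLift_liftOfForm hπ ω.1 (modk_liftOfForm ω.1))
  right_inv br :=
    Subtype.ext (liftOfForm_formOfLift hπ br.1 fun x y => by rw [br.2.2.2, hlift0])

end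

end Lifts

theorem stmt_16_general (R : Type) [CommRing R] [IsDomain R]
    (π : R) (hπ : Irreducible π) (k : ℕ) (hk : 1 ≤ k)
    (B : Type) [AddCommGroup B] [Module (Rmod R π (k + 1)) B]
    [Module.Free (Rmod R π (k + 1)) B]
    (brL : Lred R π k B →ₗ[Rmod R π (k + 1)] Lred R π k B →ₗ[Rmod R π (k + 1)] Lred R π k B)
    (br0 : B →ₗ[Rmod R π (k + 1)] B →ₗ[Rmod R π (k + 1)] B)
    (halt0 : ∀ v, br0 v v = 0)
    (hjac0 : ∀ x y z : B, br0 (br0 x y) z + br0 (br0 y z) x + br0 (br0 z x) y = 0)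
    (hlift0 : ∀ x y : B, modk R π k B (br0 x y) = brL (modk R π k B x) (modk R π k B y))
    (brb : Lbar R π k B →ₗ[Rmod R π (k + 1)] Lbar R π k B →ₗ[Rmod R π (k + 1)] Lbar R π k B)
    (hbrb : ∀ x y : B, lam R π k B (br0 x y) = brb (lam R π k B x) (lam R π k B y)) :
    Nonempty (
      Quot (fun (b1 b2 : {br : B →ₗ[Rmod R π (k + 1)] B →ₗ[Rmod R π (k + 1)] B //
          (∀ v, br v v = 0) ∧
          (∀ x y z : B, br (br x y) z + br (br y z) x + br (br z x) y = 0) ∧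
          (∀ x y : B, modk R π k B (br x y) = brL (modk R π k B x) (modk R π k B y))}) =>
        ∃ Ψ : B ≃ₗ[Rmod R π (k + 1)] B,
          (∀ x y : B, b2.1 (Ψ x) (Ψ y) = Ψ (b1.1 x y)) ∧
          (∀ x : B, modk R π k B (Ψ x) = modk R π k B x)) ≃
      Quot (fun (w1 w2 : {form : Lbar R π k B →ₗ[Rmod R π (k + 1)] Lbar R π k B
            →ₗ[Rmod R π (k + 1)] Lbar R π k B //
          (∀ v, form v v = 0) ∧
          (∀ x y z : Lbar R π k B,
            brb x (form y z) - brb y (form x z) + brb z (form x y)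
              - form (brb x y) z + form (brb x z) y - form (brb y z) x = 0)}) =>
        ∃ φ : Lbar R π k B →ₗ[Rmod R π (k + 1)] Lbar R π k B,
          ∀ u v : Lbar R π k B,
            w2.1 u v - w1.1 u v = -(-φ (brb u v) + brb u (φ v) - brb v (φ u)))) :=
  ⟨(Quot.congr (cocyclesEquivLifts hπ.ne_zero hk hbrb halt0 hjac0 brL hlift0) fun ω₁ ω₂ =>
    exists_chevalleyEilenbergD₁_iff_exists_iso hπ.ne_zero hk hbrb halt0 ω₁.1 ω₂.1).symm⟩

/-- Suppose the Lie algebra `L = B/π^k B` over `R_k` admits a Lie algebra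
lift `[·,·]₀` to `R_{k+1}` on the free module `B`.  Then the set of all Lie algebra lifts
of `L` to `R_{k+1}`, up to isomorphisms of Lie algebras inducing the identity on `L`, is
in bijection with `H²(L̄, ad)`, realized as Chevalley–Eilenberg 2-cocycles (alternating
2-forms `ω` with `dω = 0`) modulo coboundaries of 1-cochains. -/
theorem stmt_16 (R : Type) [CommRing R] [IsDomain R] [IsDiscreteValuationRing R]
    (π : R) (hπ : Irreducible π) (k : ℕ) (hk : 1 ≤ k)
    (B : Type) [AddCommGroup B] [Module (Rmod R π (k + 1)) B]
    [Module.Free (Rmod R π (k + 1)) B] [Module.Finite (Rmod R π (k + 1)) B]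
    (brL : Lred R π k B →ₗ[Rmod R π (k + 1)] Lred R π k B →ₗ[Rmod R π (k + 1)] Lred R π k B)
    (haltL : ∀ v, brL v v = 0)
    (hjacL : ∀ x y z : Lred R π k B, brL (brL x y) z + brL (brL y z) x + brL (brL z x) y = 0)
    (br0 : B →ₗ[Rmod R π (k + 1)] B →ₗ[Rmod R π (k + 1)] B)
    (halt0 : ∀ v, br0 v v = 0)
    (hjac0 : ∀ x y z : B, br0 (br0 x y) z + br0 (br0 y z) x + br0 (br0 z x) y = 0)
    (hlift0 : ∀ x y : B, modk R π k B (br0 x y) = brL (modk R π k B x) (modk R π k B y))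
    (brb : Lbar R π k B →ₗ[Rmod R π (k + 1)] Lbar R π k B →ₗ[Rmod R π (k + 1)] Lbar R π k B)
    (hbrb : ∀ x y : B, lam R π k B (br0 x y) = brb (lam R π k B x) (lam R π k B y)) :
    Nonempty (
      Quot (fun (b1 b2 : {br : B →ₗ[Rmod R π (k + 1)] B →ₗ[Rmod R π (k + 1)] B //
          (∀ v, br v v = 0) ∧
          (∀ x y z : B, br (br x y) z + br (br y z) x + br (br z x) y = 0) ∧
          (∀ x y : B, modk R π k B (br x y) = brL (modk R π k B x) (modk R π k B y))}) =>
        ∃ Ψ : B ≃ₗ[Rmod R π (k + 1)] B,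
          (∀ x y : B, b2.1 (Ψ x) (Ψ y) = Ψ (b1.1 x y)) ∧
          (∀ x : B, modk R π k B (Ψ x) = modk R π k B x)) ≃
      Quot (fun (w1 w2 : {form : Lbar R π k B →ₗ[Rmod R π (k + 1)] Lbar R π k B
            →ₗ[Rmod R π (k + 1)] Lbar R π k B //
          (∀ v, form v v = 0) ∧
          (∀ x y z : Lbar R π k B,
            brb x (form y z) - brb y (form x z) + brb z (form x y)
              - form (brb x y) z + form (brb x z) y - form (brb y z) x = 0)}) =>
        ∃ φ : Lbar R π k B →ₗ[Rmod R π (k + 1)] Lbar R π k B,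
          ∀ u v : Lbar R π k B,
            w2.1 u v - w1.1 u v = -(-φ (brb u v) + brb u (φ v) - brb v (φ u)))) :=
  stmt_16_general R π hπ k hk B brL br0 halt0 hjac0 hlift0 brb hbrb
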